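/- arXiv:1511.02604 — 2 statements merged into one kernel-verified Lean document; each statement's English description precedes it below -/
import Mathlib

section
/- Let L ∈ ℝ^{n×n} be the Laplacian of a weighted digraph and let q ∈ ℝ_{>0}^n satisfy qᵀL = 0. If x : [0,∞) → ℝ_{>0}^n is a differentiable solution of the entropic protocol ẋ_i = −Σ_{j} w_{ij} x_i ln(x_i/x_j), then the quantity Σ_{i=1}^n q_i ln x_i(t) is constant in time. -/
open Real Finset Set Matrix

/-!
Along the entropic flow, `d/dt ln xᵢ = -∑ⱼ wᵢⱼ (ln xᵢ - ln xⱼ) = -(L ln x)ᵢ`: in logarithmic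
coordinates the protocol is linear consensus. Hence `d/dt ∑ᵢ qᵢ ln xᵢ = -qᵀ L ln x = 0`.
-/

theorem Convex.is_const_of_hasDerivAt_eq_zero {E : Type*} [NormedAddCommGroup E]
    [NormedSpace ℝ E] {s : Set ℝ} (hs : Convex ℝ s) {f : ℝ → E}
    (hf : ∀ u ∈ s, HasDerivAt f 0 u) {t u : ℝ} (ht : t ∈ s) (hu : u ∈ s) : f t = f u := by
  have h := hs.norm_image_sub_le_of_norm_hasDerivWithin_le (C := 0)
    (fun v hv => (hf v hv).hasDerivWithinAt) (fun _ _ => norm_zero.le) hu ht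
  rwa [zero_mul, norm_le_zero_iff, sub_eq_zero] at h

namespace EntropicProtocol

variable {ι : Type*} [Fintype ι] [DecidableEq ι]

def laplacian (w : ι → ι → ℝ) : Matrix ι ι ℝ :=
  diagonal (fun i => ∑ k, w i k) - of w

theorem vecMul_laplacian_apply (w : ι → ι → ℝ) (q : ι → ℝ) (j : ι) :
    (q ᵥ* laplacian w) j = ∑ i, q i * ((if i = j then ∑ k, w i k else 0) - w i j) := by
  simp only [laplacian, vecMul, dotProduct, Matrix.sub_apply, diagonal_apply, of_apply]

theorem laplacian_mulVec_apply (w : ι → ι → ℝ) (v : ι → ℝ) (i : ι) :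
    (laplacian w *ᵥ v) i = ∑ j, w i j * (v i - v j) := by
  rw [laplacian, sub_mulVec, Pi.sub_apply, mulVec_diagonal]
  simp only [mulVec, dotProduct, of_apply, Finset.sum_mul, mul_sub, sum_sub_distrib]

theorem dotProduct_laplacian_mulVec_eq_zero {w : ι → ι → ℝ} {q : ι → ℝ}
    (hq : q ᵥ* laplacian w = 0) (v : ι → ℝ) : q ⬝ᵥ (laplacian w *ᵥ v) = 0 := by
  rw [dotProduct_mulVec, hq, zero_dotProduct]

variable {w : ι → ι → ℝ} {x : ℝ → ι → ℝ} {t : ℝ}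

theorem hasDerivAt_log_of_entropic {i : ι} (hx : ∀ j, x t j ≠ 0)
    (hode : HasDerivAt (fun s => x s i) (-∑ j, w i j * x t i * log (x t i / x t j)) t) :
    HasDerivAt (fun s => log (x s i)) (-(laplacian w *ᵥ fun j => log (x t j)) i) t := by
  convert hode.log (hx i) using 1
  rw [laplacian_mulVec_apply, neg_div, Finset.sum_div]
  congr 1
  refine Finset.sum_congr rfl fun j _ => ?_
  rw [log_div (hx i) (hx j)]
  field_simp [hx i]

theorem hasDerivAt_sum_mul_log_of_entropic {q : ι → ℝ} (hq : q ᵥ* laplacian w = 0)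
    (hx : ∀ j, x t j ≠ 0)
    (hode : ∀ i, HasDerivAt (fun s => x s i) (-∑ j, w i j * x t i * log (x t i / x t j)) t) :
    HasDerivAt (fun s => ∑ i, q i * log (x s i)) 0 t := by
  have h := HasDerivAt.fun_sum fun i (_ : i ∈ Finset.univ) =>
    (hasDerivAt_log_of_entropic hx (hode i)).const_mul (q i)
  have h0 := dotProduct_laplacian_mulVec_eq_zero hq fun j => log (x t j)
  rw [dotProduct] at h0
  simpa only [mul_neg, sum_neg_distrib, h0, neg_zero] using h

end EntropicProtocol

open EntropicProtocol in
theorem entropic_protocol_invariant_general (n : ℕ) (w : Fin n → Fin n → ℝ)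
    (q : Fin n → ℝ)
    (hqL : ∀ j, ∑ i, q i * ((if i = j then ∑ k, w i k else 0) - w i j) = 0)
    (x : ℝ → Fin n → ℝ) (hpos : ∀ t ∈ Set.Ici (0 : ℝ), ∀ i, 0 < x t i)
    (hode : ∀ t ∈ Set.Ici (0 : ℝ), ∀ i,
      HasDerivAt (fun s => x s i)
        (-∑ j, w i j * x t i * Real.log (x t i / x t j)) t) :
    ∀ t ∈ Set.Ici (0 : ℝ), ∀ s ∈ Set.Ici (0 : ℝ),
      ∑ i, q i * Real.log (x t i) = ∑ i, q i * Real.log (x s i) := by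
  have hq : q ᵥ* laplacian w = 0 := funext fun j => (vecMul_laplacian_apply w q j).trans (hqL j)
  intro t ht s hs
  exact (convex_Ici 0).is_const_of_hasDerivAt_eq_zero (fun u hu =>
    hasDerivAt_sum_mul_log_of_entropic hq (fun j => (hpos u hu j).ne') (hode u hu)) ht hs

/-- If `q ∈ ℝ_{>0}^n` is a left null vector of the Laplacian `L = D − W` of a weighted
digraph, and `x : [0,∞) → ℝ_{>0}^n` solves the entropic protocol
`ẋ i = −∑ j, w i j * x i * ln(x i / x j)`, then `∑ i, q i * ln (x t i)` is constant. -/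
theorem entropic_protocol_invariant (n : ℕ) (w : Fin n → Fin n → ℝ)
    (hw : ∀ i j, 0 ≤ w i j) (q : Fin n → ℝ) (hq : ∀ i, 0 < q i)
    (hqL : ∀ j, ∑ i, q i * ((if i = j then ∑ k, w i k else 0) - w i j) = 0)
    (x : ℝ → Fin n → ℝ) (hpos : ∀ t ∈ Set.Ici (0 : ℝ), ∀ i, 0 < x t i)
    (hode : ∀ t ∈ Set.Ici (0 : ℝ), ∀ i,
      HasDerivAt (fun s => x s i)
        (-∑ j, w i j * x t i * Real.log (x t i / x t j)) t) :
    ∀ t ∈ Set.Ici (0 : ℝ), ∀ s ∈ Set.Ici (0 : ℝ),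
      ∑ i, q i * Real.log (x t i) = ∑ i, q i * Real.log (x s i) :=
  entropic_protocol_invariant_general n w q hqL x hpos hode
end

section
/- Let L be the Laplacian of a weighted digraph with qᵀL = 0, q ∈ ℝ_{>0}^n. If x(t) solves the entropic protocol ẋ_i = −Σ_j w_{ij} x_i ln(x_i/x_j) on ℝ_{>0}^n and x(t) converges to a consensus point x̄·1 with x̄ > 0 as t → ∞, then x̄ = Π_{i=1}^n x_i(0)^{q̂_i}, where q̂ = q/‖q‖_1, i.e., the consensus value is the weighted geometric mean of the initial condition. -/
/-!
Along the entropic flow, `d/dt log xᵢ = ∑ⱼ wᵢⱼ (log xⱼ - log xᵢ)`, so the `q`-weighted sum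
`V = ∑ᵢ qᵢ log xᵢ` has derivative `∑ᵢⱼ qᵢ wᵢⱼ (log xⱼ - log xᵢ)`, which vanishes because
`qᵀL = 0` says exactly that the `q`-weighted inflow `∑ᵢ qᵢ wᵢⱼ` into every node `j` equals its
outflow `qⱼ ∑ₖ wⱼₖ`. Hence `V` is conserved, and passing to the limit gives
`(∑ᵢ qᵢ) log x̄ = ∑ᵢ qᵢ log xᵢ(0)`.
-/

open Real Finset Set Filter Topology

theorem sum_mul_weight_eq_mul_rowSum_of_laplacian_left_null {ι R : Type*} [Fintype ι]
    [DecidableEq ι] [CommRing R] {w : ι → ι → R} {q : ι → R}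
    (hqL : ∀ j, ∑ i, q i * ((if i = j then ∑ k, w i k else 0) - w i j) = 0) (j : ι) :
    ∑ i, q i * w i j = q j * ∑ k, w j k := by
  have h := hqL j
  simp only [mul_sub, sum_sub_distrib, mul_ite, mul_zero, sum_ite_eq', Finset.mem_univ,
    if_true] at h
  exact (sub_eq_zero.mp h).symm

theorem sum_mul_sum_mul_sub_eq_zero_of_balanced {ι R : Type*} [Fintype ι] [CommRing R]
    {w : ι → ι → R} {q : ι → R} (hbal : ∀ j, ∑ i, q i * w i j = q j * ∑ k, w j k)
    (y : ι → R) :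
    ∑ i, q i * ∑ j, w i j * (y j - y i) = 0 := by
  have inflow : ∑ i, q i * ∑ j, w i j * y j = ∑ j, (∑ i, q i * w i j) * y j := by
    simp only [mul_sum, sum_mul, mul_assoc]
    exact sum_comm
  have outflow : ∑ i, q i * ∑ j, w i j * y i = ∑ i, q i * (∑ k, w i k) * y i :=
    sum_congr rfl fun i _ => by rw [← sum_mul, mul_assoc]
  simp only [mul_sub, sum_sub_distrib, inflow, outflow, hbal, sub_self]

theorem hasDerivAt_log_of_entropic {ι : Type*} [Fintype ι] {w : ι → ι → ℝ}
    {x : ℝ → ι → ℝ} {t : ℝ} (hpos : ∀ i, 0 < x t i) (i : ι)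
    (hode : HasDerivAt (fun s => x s i) (-∑ j, w i j * x t i * log (x t i / x t j)) t) :
    HasDerivAt (fun s => log (x s i)) (∑ j, w i j * (log (x t j) - log (x t i))) t := by
  convert hode.log (hpos i).ne' using 1
  rw [neg_div, sum_div, ← sum_neg_distrib]
  refine sum_congr rfl fun j _ => ?_
  rw [log_div (hpos i).ne' (hpos j).ne']
  field_simp [(hpos i).ne']
  ring

theorem eq_of_tendsto_of_hasDerivAt_zero {f : ℝ → ℝ} {a l : ℝ}
    (hf : ∀ t ∈ Ici a, HasDerivAt f 0 t) (hlim : Tendsto f atTop (𝓝 l)) : l = f a := by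
  have hconst : ∀ T ∈ Ici a, f T = f a := fun T hT =>
    constant_of_has_deriv_right_zero (fun s hs => (hf s hs.1).continuousAt.continuousWithinAt)
      (fun s hs => (hf s hs.1).hasDerivWithinAt) T ⟨hT, le_rfl⟩
  refine tendsto_nhds_unique hlim (tendsto_const_nhds.congr' ?_)
  filter_upwards [eventually_ge_atTop a] with T hT
  exact (hconst T hT).symm

theorem eq_prod_rpow_of_mul_log_eq {ι : Type*} [Fintype ι] {q x : ι → ℝ} {m : ℝ}
    (hm : 0 < m) (hx : ∀ i, 0 < x i) (hQ : ∑ j, q j ≠ 0)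
    (h : (∑ j, q j) * log m = ∑ i, q i * log (x i)) :
    m = ∏ i, x i ^ (q i / ∑ j, q j) := by
  have hprod : 0 < ∏ i, x i ^ (q i / ∑ j, q j) :=
    prod_pos fun i _ => rpow_pos_of_pos (hx i) _
  refine log_injOn_pos hm hprod ?_
  rw [log_prod fun i _ => (rpow_pos_of_pos (hx i) _).ne',
    eq_div_of_mul_eq hQ ((mul_comm _ _).trans h), sum_div]
  exact sum_congr rfl fun i _ => by rw [log_rpow (hx i)]; ring

theorem entropic_protocol_weighted_geometric_mean_consensus_general (n : ℕ) (hn : 0 < n)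
    (w : Fin n → Fin n → ℝ)
    (q : Fin n → ℝ) (hq : ∀ i, 0 < q i)
    (hqL : ∀ j, ∑ i, q i * ((if i = j then ∑ k, w i k else 0) - w i j) = 0)
    (x : ℝ → Fin n → ℝ) (hpos : ∀ t ∈ Set.Ici (0 : ℝ), ∀ i, 0 < x t i)
    (hode : ∀ t ∈ Set.Ici (0 : ℝ), ∀ i,
      HasDerivAt (fun s => x s i)
        (-∑ j, w i j * x t i * Real.log (x t i / x t j)) t)
    (xbar : ℝ) (hxbar : 0 < xbar)
    (hlim : ∀ i, Filter.Tendsto (fun t => x t i) Filter.atTop (𝓝 xbar)) :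
    xbar = ∏ i, x 0 i ^ (q i / ∑ j, q j) := by
  have hQ : 0 < ∑ j, q j :=
    sum_pos (fun i _ => hq i) (univ_nonempty_iff.mpr (Fin.pos_iff_nonempty.mp hn))
  have hconserved : ∀ t ∈ Ici (0 : ℝ), HasDerivAt (fun s => ∑ i, q i * log (x s i)) 0 t :=
    fun t ht =>
      (HasDerivAt.fun_sum (u := univ) fun i _ =>
        (hasDerivAt_log_of_entropic (hpos t ht) i (hode t ht i)).const_mul (q i)).congr_deriv
      (sum_mul_sum_mul_sub_eq_zero_of_balanced
        (sum_mul_weight_eq_mul_rowSum_of_laplacian_left_null hqL) _)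
  have hlimV : Tendsto (fun s => ∑ i, q i * log (x s i)) atTop (𝓝 ((∑ j, q j) * log xbar)) := by
    rw [sum_mul]
    exact tendsto_finsetSum _ fun i _ =>
      ((continuousAt_log hxbar.ne').tendsto.comp (hlim i)).const_mul (q i)
  exact eq_prod_rpow_of_mul_log_eq hxbar (hpos 0 self_mem_Ici) hQ.ne'
    (eq_of_tendsto_of_hasDerivAt_zero hconserved hlimV)

/-- If `qᵀL = 0` with `q > 0`, and `x(t)` solves the entropic protocol on `ℝ_{>0}^n`
converging to a consensus point `x̄·1` with `x̄ > 0`, then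
`x̄ = ∏ i, x 0 i ^ (q i / ∑ j, q j)`: the consensus value is the weighted geometric
mean of the initial condition. -/
theorem entropic_protocol_weighted_geometric_mean_consensus (n : ℕ) (hn : 0 < n)
    (w : Fin n → Fin n → ℝ) (hw : ∀ i j, 0 ≤ w i j)
    (q : Fin n → ℝ) (hq : ∀ i, 0 < q i)
    (hqL : ∀ j, ∑ i, q i * ((if i = j then ∑ k, w i k else 0) - w i j) = 0)
    (x : ℝ → Fin n → ℝ) (hpos : ∀ t ∈ Set.Ici (0 : ℝ), ∀ i, 0 < x t i)
    (hode : ∀ t ∈ Set.Ici (0 : ℝ), ∀ i,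
      HasDerivAt (fun s => x s i)
        (-∑ j, w i j * x t i * Real.log (x t i / x t j)) t)
    (xbar : ℝ) (hxbar : 0 < xbar)
    (hlim : ∀ i, Filter.Tendsto (fun t => x t i) Filter.atTop (𝓝 xbar)) :
    xbar = ∏ i, x 0 i ^ (q i / ∑ j, q j) :=
  entropic_protocol_weighted_geometric_mean_consensus_general n hn w q hq hqL x hpos hode xbar hxbar
    hlim
end
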